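/- arXiv:2602.00386 — 7 statements merged into one kernel-verified Lean document; each statement's English description precedes it below -/
import Mathlib

section
/- Let A = CR be a full-rank factorization of a real m×n matrix A of rank r, where C is m×r with full column rank r and R is r×n with full row rank r. Then the r×r matrix CᵀARᵀ is invertible and the Moore–Penrose pseudoinverse of A is given by A⁺ = Rᵀ(CᵀARᵀ)⁻¹Cᵀ. -/
open Matrix

/-!
With `C⁺ = (CᵀC)⁻¹Cᵀ` and `R⁺ = Rᵀ(RRᵀ)⁻¹`, a left inverse of `C` and a right inverse of `R`,
the candidate factors as `Rᵀ(CᵀCRRᵀ)⁻¹Cᵀ = R⁺C⁺`. The Penrose equations for `CR` and `R⁺C⁺`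
then follow from `C⁺C = 1`, `RR⁺ = 1` and the symmetry of the orthogonal projections `CC⁺` and
`R⁺R`. The Gram matrices `CᵀC` and `RRᵀ` are invertible because they are positive definite.
-/

/-- `G` satisfies the four Penrose equations for `A`, i.e. `G` is the Moore–Penrose
pseudoinverse of `A`. -/
def IsMoorePenrose {m n : ℕ} (A : Matrix (Fin m) (Fin n) ℝ)
    (G : Matrix (Fin n) (Fin m) ℝ) : Prop :=
  A * G * A = A ∧ G * A * G = G ∧ (A * G)ᵀ = A * G ∧ (G * A)ᵀ = G * A

namespace Matrix

variable {m n : Type*} [Fintype m] [Fintype n]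

theorem isUnit_transpose_mul_self_of_linearIndependent_col [DecidableEq n]
    (C : Matrix m n ℝ) (hC : LinearIndependent ℝ C.col) : IsUnit (Cᵀ * C) :=
  (PosDef.conjTranspose_mul_self C (mulVec_injective_iff.mpr hC)).isUnit

theorem isUnit_mul_transpose_self_of_linearIndependent_row [DecidableEq m]
    (R : Matrix m n ℝ) (hR : LinearIndependent ℝ R.row) : IsUnit (R * Rᵀ) :=
  (PosDef.mul_conjTranspose_self R (vecMul_injective_iff.mpr hR)).isUnit

theorem isSymm_mul_inv_transpose_mul_self_mul_transpose {K : Type*} [CommRing K]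
    [DecidableEq n] (X : Matrix m n K) : (X * ((Xᵀ * X)⁻¹ * Xᵀ)).IsSymm := by
  rw [IsSymm, transpose_mul, transpose_mul, transpose_nonsing_inv, transpose_mul,
    transpose_transpose, Matrix.mul_assoc]

end Matrix

theorem isMoorePenrose_mul {m n r : ℕ} (C : Matrix (Fin m) (Fin r) ℝ)
    (R : Matrix (Fin r) (Fin n) ℝ) (Cl : Matrix (Fin r) (Fin m) ℝ)
    (Rr : Matrix (Fin n) (Fin r) ℝ) (hCl : Cl * C = 1) (hRr : R * Rr = 1)
    (hCCl : (C * Cl).IsSymm) (hRrR : (Rr * R).IsSymm) :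
    IsMoorePenrose (C * R) (Rr * Cl) := by
  have hAG : C * R * (Rr * Cl) = C * Cl := by
    rw [Matrix.mul_assoc, ← Matrix.mul_assoc R, hRr, Matrix.one_mul]
  have hGA : Rr * Cl * (C * R) = Rr * R := by
    rw [Matrix.mul_assoc, ← Matrix.mul_assoc Cl, hCl, Matrix.one_mul]
  refine ⟨?_, ?_, hAG ▸ hCCl, hGA ▸ hRrR⟩
  · rw [hAG, Matrix.mul_assoc, ← Matrix.mul_assoc Cl, hCl, Matrix.one_mul]
  · rw [hGA, Matrix.mul_assoc, ← Matrix.mul_assoc R, hRr, Matrix.one_mul]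

theorem fullRank_factorization_pinv_general (m n r : ℕ)
    (A : Matrix (Fin m) (Fin n) ℝ)
    (C : Matrix (Fin m) (Fin r) ℝ) (R : Matrix (Fin r) (Fin n) ℝ)
    (hA : A = C * R)
    (hC : LinearIndependent ℝ (fun j : Fin r => fun i : Fin m => C i j))
    (hR : LinearIndependent ℝ (fun i : Fin r => R i)) :
    IsUnit (Cᵀ * A * Rᵀ) ∧ IsMoorePenrose A (Rᵀ * (Cᵀ * A * Rᵀ)⁻¹ * Cᵀ) := by
  have hCC := isUnit_transpose_mul_self_of_linearIndependent_col C hC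
  have hRR := isUnit_mul_transpose_self_of_linearIndependent_row R hR
  have hfactor : Cᵀ * A * Rᵀ = Cᵀ * C * (R * Rᵀ) := by
    rw [hA]; simp only [Matrix.mul_assoc]
  have hG : Rᵀ * (Cᵀ * A * Rᵀ)⁻¹ * Cᵀ = Rᵀ * (R * Rᵀ)⁻¹ * ((Cᵀ * C)⁻¹ * Cᵀ) := by
    rw [hfactor, Matrix.mul_inv_rev]; simp only [Matrix.mul_assoc]
  refine ⟨hfactor ▸ hCC.mul hRR, ?_⟩
  rw [hG, hA]
  apply isMoorePenrose_mul
  · rw [Matrix.mul_assoc, nonsing_inv_mul _ ((isUnit_iff_isUnit_det _).mp hCC)]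
  · rw [← Matrix.mul_assoc, mul_nonsing_inv _ ((isUnit_iff_isUnit_det _).mp hRR)]
  · exact isSymm_mul_inv_transpose_mul_self_mul_transpose C
  · simpa only [transpose_transpose, Matrix.mul_assoc] using
      isSymm_mul_inv_transpose_mul_self_mul_transpose Rᵀ

/-- For a full-rank factorization `A = C * R` of a rank-`r` matrix `A`, the matrix
`Cᵀ * A * Rᵀ` is invertible and `A⁺ = Rᵀ * (Cᵀ * A * Rᵀ)⁻¹ * Cᵀ`. -/
theorem fullRank_factorization_pinv (m n r : ℕ)
    (A : Matrix (Fin m) (Fin n) ℝ)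
    (C : Matrix (Fin m) (Fin r) ℝ) (R : Matrix (Fin r) (Fin n) ℝ)
    (hA : A = C * R) (hrank : A.rank = r)
    (hC : LinearIndependent ℝ (fun j : Fin r => fun i : Fin m => C i j))
    (hR : LinearIndependent ℝ (fun i : Fin r => R i)) :
    IsUnit (Cᵀ * A * Rᵀ) ∧ IsMoorePenrose A (Rᵀ * (Cᵀ * A * Rᵀ)⁻¹ * Cᵀ) :=
  fullRank_factorization_pinv_general m n r A C R hA hC hR
end

section
/- (Greville's conditions.) Let C be a real m×r matrix and R a real r×n matrix. Then the reverse order law (CR)⁺ = R⁺C⁺ holds if and only if the column space of RRᵀCᵀ is contained in the column space of Cᵀ and the column space of CᵀCR is contained in the column space of R. -/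
open Matrix

/-!
Let `P = C⁺C` and `Q = RR⁺`, the orthogonal projectors onto the column spaces of `Cᵀ` and `R`.
The first condition reads `P RRᵀCᵀ = RRᵀCᵀ` and amounts to `P` commuting with `RRᵀ`; the
substitution `(C, R) ↦ (Rᵀ, Cᵀ)` turns it into the second one, so each direction only has to
be argued for one condition.

If `R⁺C⁺ = (CR)⁺`, then `(CR)⁺(CR)(CR)ᵀ = (CR)ᵀ` gives `QPX = X` for `X = RRᵀCᵀ`; as `P` and
`Q` are orthogonal projectors, `‖X‖ = ‖QPX‖ ≤ ‖PX‖ ≤ ‖X‖` forces `PX = X`.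
Conversely, if `P` commutes with `RRᵀ` then `PR = RRᵀ P R⁺ᵀ`, from which `QPR = PR` and
three of the Penrose equations for `R⁺C⁺` follow; the remaining one, `CR·R⁺C⁺` symmetric, is
the transpose of the same statement for the exchanged pair.
-/

namespace Matrix

variable {l m n : Type*}

theorem range_mulVecLin_le_iff {K : Type*} [CommSemiring K] [Fintype l] [Fintype m] [Fintype n]
    {A : Matrix l m K} {G : Matrix m l K} (hA : A * G * A = A) {M : Matrix l n K} :
    LinearMap.range M.mulVecLin ≤ LinearMap.range A.mulVecLin ↔ A * G * M = M := by
  constructor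
  · intro h
    refine ext_iff_mulVec.mpr fun v => ?_
    obtain ⟨w, hw⟩ := h ⟨v, rfl⟩
    simp only [mulVecLin_apply] at hw
    rw [← mulVec_mulVec, ← hw, mulVec_mulVec, hA]
  · intro h
    rw [← h, Matrix.mul_assoc, mulVecLin_mul]
    exact LinearMap.range_comp_le_range _ _

theorem commute_of_mul_mul_eq_mul {K : Type*} [CommSemiring K] [Fintype n] {P S : Matrix n n K}
    (hP : Pᵀ = P) (hS : Sᵀ = S) (h : P * S * P = S * P) : Commute P S :=
  calc P * S = (S * P)ᵀ := by rw [transpose_mul, hP, hS]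
    _ = (P * S * P)ᵀ := by rw [h]
    _ = P * S * P := by rw [transpose_mul, transpose_mul, hP, hS, Matrix.mul_assoc]
    _ = S * P := h

theorem mul_eq_self_of_mul_mul_eq_self [Fintype n] {P Q : Matrix n n ℝ} {X : Matrix n m ℝ}
    (hP : Pᵀ = P) (hPP : IsIdempotentElem P) (hQ : Qᵀ = Q) (hQQ : IsIdempotentElem Q)
    (h : Q * (P * X) = X) : P * X = X := by
  have hQX : Q * X = X := by rw [← h, ← Matrix.mul_assoc, hQQ.eq]
  have hXX : Xᵀ * (P * X) = Xᵀ * X :=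
    calc Xᵀ * (P * X) = (Q * X)ᵀ * (P * X) := by rw [hQX]
      _ = Xᵀ * (Q * (P * X)) := by rw [transpose_mul, hQ, Matrix.mul_assoc]
      _ = Xᵀ * X := by rw [h]
  have hXP : (P * X)ᵀ * (P * X) = Xᵀ * X := by
    rw [transpose_mul, hP, Matrix.mul_assoc, ← Matrix.mul_assoc P, hPP.eq, hXX]
  have hPX : (P * X)ᵀ * X = Xᵀ * X := by
    rw [← transpose_transpose ((P * X)ᵀ * X), transpose_mul, transpose_transpose, hXX,
      transpose_mul, transpose_transpose]
  have hY : (X - P * X)ᵀ * (X - P * X) = 0 := by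
    rw [transpose_sub, Matrix.sub_mul, Matrix.mul_sub, Matrix.mul_sub, hXX, hXP, hPX]
    abel
  rw [← conjTranspose_eq_transpose_of_trivial] at hY
  exact (sub_eq_zero.mp (conjTranspose_mul_self_eq_zero.mp hY)).symm

end Matrix

namespace IsMoorePenrose

variable {m n : ℕ} {A : Matrix (Fin m) (Fin n) ℝ} {G : Matrix (Fin n) (Fin m) ℝ}

theorem transpose (h : IsMoorePenrose A G) : IsMoorePenrose Aᵀ Gᵀ := by
  obtain ⟨h₁, h₂, h₃, h₄⟩ := h
  refine ⟨?_, ?_, ?_, ?_⟩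
  · rw [← transpose_mul, ← transpose_mul, ← Matrix.mul_assoc, h₁]
  · rw [← transpose_mul, ← transpose_mul, ← Matrix.mul_assoc, h₂]
  · rw [← transpose_mul, transpose_transpose, h₄]
  · rw [← transpose_mul, transpose_transpose, h₃]

theorem unique {H : Matrix (Fin n) (Fin m) ℝ} (hG : IsMoorePenrose A G)
    (hH : IsMoorePenrose A H) : G = H := by
  obtain ⟨g₁, g₂, g₃, g₄⟩ := hG
  obtain ⟨h₁, h₂, h₃, h₄⟩ := hH
  have hAG : A * G = A * H :=
    calc A * G = (A * H * A * G)ᵀ := by rw [h₁, g₃]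
      _ = A * G * (A * H) := by rw [Matrix.mul_assoc (A * H), transpose_mul, g₃, h₃]
      _ = A * H := by rw [← Matrix.mul_assoc, g₁]
  have hGA : G * A = H * A :=
    calc G * A = (G * (A * H * A))ᵀ := by rw [h₁, g₄]
      _ = H * A * (G * A) := by
        rw [Matrix.mul_assoc A, ← Matrix.mul_assoc, transpose_mul, g₄, h₄]
      _ = H * A := by rw [Matrix.mul_assoc H, ← Matrix.mul_assoc A, g₁]
  calc G = G * A * G := g₂.symm
    _ = H * A * H := by rw [hGA, Matrix.mul_assoc, hAG, ← Matrix.mul_assoc]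
    _ = H := h₂

theorem isIdempotentElem_mul_pinv (h : IsMoorePenrose A G) : IsIdempotentElem (A * G) := by
  rw [IsIdempotentElem, ← Matrix.mul_assoc, h.1]

theorem isIdempotentElem_pinv_mul (h : IsMoorePenrose A G) : IsIdempotentElem (G * A) := by
  rw [IsIdempotentElem, ← Matrix.mul_assoc, h.2.1]

theorem pinv_transpose_mul_transpose (h : IsMoorePenrose A G) : Gᵀ * Aᵀ = A * G := by
  rw [← transpose_mul, h.2.2.1]

theorem transpose_mul_pinv_transpose (h : IsMoorePenrose A G) : Aᵀ * Gᵀ = G * A := by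
  rw [← transpose_mul, h.2.2.2]

theorem pinv_mul_mul_transpose (h : IsMoorePenrose A G) : G * A * Aᵀ = Aᵀ := by
  rw [← h.2.2.2, ← transpose_mul, ← Matrix.mul_assoc, h.1]

theorem mul_transpose_mul_pinv_transpose (h : IsMoorePenrose A G) : A * Aᵀ * Gᵀ = A := by
  simpa only [transpose_mul, transpose_transpose, Matrix.mul_assoc]
    using congrArg Matrix.transpose h.pinv_mul_mul_transpose

theorem pinv_mul_pinv_transpose_mul_transpose (h : IsMoorePenrose A G) : G * Gᵀ * Aᵀ = G := by
  rw [Matrix.mul_assoc, ← transpose_mul, h.2.2.1, ← Matrix.mul_assoc, h.2.1]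

end IsMoorePenrose

section Greville

variable {m r n : ℕ} {C : Matrix (Fin m) (Fin r) ℝ} {R : Matrix (Fin r) (Fin n) ℝ}
  {Cp : Matrix (Fin r) (Fin m) ℝ} {Rp : Matrix (Fin n) (Fin r) ℝ}

theorem greville_left_of_isMoorePenrose_mul (hC : IsMoorePenrose C Cp)
    (hR : IsMoorePenrose R Rp) (h : IsMoorePenrose (C * R) (Rp * Cp)) :
    Cp * C * (R * Rᵀ * Cᵀ) = R * Rᵀ * Cᵀ := by
  refine mul_eq_self_of_mul_mul_eq_self hC.2.2.2 hC.isIdempotentElem_pinv_mul hR.2.2.1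
    hR.isIdempotentElem_mul_pinv ?_
  calc R * Rp * (Cp * C * (R * Rᵀ * Cᵀ)) = R * (Rp * Cp * (C * R) * (C * R)ᵀ) := by
        simp only [transpose_mul, Matrix.mul_assoc]
    _ = R * Rᵀ * Cᵀ := by rw [h.pinv_mul_mul_transpose, transpose_mul, Matrix.mul_assoc]

theorem greville_right_of_isMoorePenrose_mul (hC : IsMoorePenrose C Cp)
    (hR : IsMoorePenrose R Rp) (h : IsMoorePenrose (C * R) (Rp * Cp)) :
    R * Rp * (Cᵀ * C * R) = Cᵀ * C * R := by
  have := greville_left_of_isMoorePenrose_mul hR.transpose hC.transpose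
    (by simpa only [transpose_mul] using h.transpose)
  rwa [transpose_transpose, transpose_transpose, hR.pinv_transpose_mul_transpose] at this

theorem commute_of_greville_left (hC : IsMoorePenrose C Cp)
    (h : Cp * C * (R * Rᵀ * Cᵀ) = R * Rᵀ * Cᵀ) : Commute (Cp * C) (R * Rᵀ) := by
  refine commute_of_mul_mul_eq_mul hC.2.2.2 (by rw [transpose_mul, transpose_transpose]) ?_
  calc Cp * C * (R * Rᵀ) * (Cp * C) = Cp * C * (R * Rᵀ * Cᵀ) * Cpᵀ := by
        simp only [← hC.transpose_mul_pinv_transpose, Matrix.mul_assoc]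
    _ = R * Rᵀ * (Cp * C) := by rw [h, Matrix.mul_assoc, hC.transpose_mul_pinv_transpose]

theorem pinv_mul_mul_eq_of_commute (hR : IsMoorePenrose R Rp)
    (hPS : Commute (Cp * C) (R * Rᵀ)) : Cp * C * R = R * Rᵀ * (Cp * C) * Rpᵀ := by
  rw [← hPS.eq, Matrix.mul_assoc (Cp * C), hR.mul_transpose_mul_pinv_transpose]

theorem mul_pinv_mul_pinv_mul_mul_of_commute (hR : IsMoorePenrose R Rp)
    (hPS : Commute (Cp * C) (R * Rᵀ)) : R * Rp * (Cp * C * R) = Cp * C * R := by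
  rw [pinv_mul_mul_eq_of_commute hR hPS]
  simp only [← Matrix.mul_assoc]
  rw [hR.1]

theorem mul_pinv_mul_self_of_commute (hC : IsMoorePenrose C Cp) (hR : IsMoorePenrose R Rp)
    (hPS : Commute (Cp * C) (R * Rᵀ)) : C * R * (Rp * Cp) * (C * R) = C * R :=
  calc C * R * (Rp * Cp) * (C * R) = C * (R * Rp * (Cp * C * R)) := by
        simp only [Matrix.mul_assoc]
    _ = C * R := by
        rw [mul_pinv_mul_pinv_mul_mul_of_commute hR hPS, ← Matrix.mul_assoc, ← Matrix.mul_assoc,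
          hC.1]

theorem pinv_mul_self_mul_pinv_of_commute (hC : IsMoorePenrose C Cp) (hR : IsMoorePenrose R Rp)
    (hPS : Commute (Cp * C) (R * Rᵀ)) : Rp * Cp * (C * R) * (Rp * Cp) = Rp * Cp := by
  have h := congrArg Matrix.transpose (mul_pinv_mul_pinv_mul_mul_of_commute hR hPS)
  rw [transpose_mul, transpose_mul, hR.2.2.1, transpose_mul, hC.transpose_mul_pinv_transpose] at h
  calc Rp * Cp * (C * R) * (Rp * Cp) = Rp * Rpᵀ * (Rᵀ * (Cp * C) * (R * Rp)) * Cp := by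
        simp only [← Matrix.mul_assoc, hR.pinv_mul_pinv_transpose_mul_transpose]
    _ = Rp * Rpᵀ * Rᵀ * (Cp * C * Cp) := by rw [h]; simp only [Matrix.mul_assoc]
    _ = Rp * Cp := by rw [hR.pinv_mul_pinv_transpose_mul_transpose, hC.2.1]

theorem transpose_pinv_mul_self_of_commute (hC : IsMoorePenrose C Cp)
    (hR : IsMoorePenrose R Rp) (hPS : Commute (Cp * C) (R * Rᵀ)) :
    (Rp * Cp * (C * R))ᵀ = Rp * Cp * (C * R) := by
  have h : Rp * Cp * (C * R) = Rᵀ * (Cp * C) * Rpᵀ :=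
    calc Rp * Cp * (C * R) = Rp * (Cp * C * R) := by simp only [Matrix.mul_assoc]
      _ = Rp * R * Rᵀ * ((Cp * C) * Rpᵀ) := by
        rw [pinv_mul_mul_eq_of_commute hR hPS]
        simp only [Matrix.mul_assoc]
      _ = Rᵀ * (Cp * C) * Rpᵀ := by
        rw [hR.pinv_mul_mul_transpose]
        simp only [Matrix.mul_assoc]
  calc (Rp * Cp * (C * R))ᵀ = (Rᵀ * (Cp * C) * Rpᵀ)ᵀ := by rw [h]
    _ = Rp * Cp * (C * R) := by
        rw [transpose_mul, transpose_mul, transpose_transpose, transpose_transpose, hC.2.2.2]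
        simp only [Matrix.mul_assoc]

theorem isMoorePenrose_mul_of_greville (hC : IsMoorePenrose C Cp) (hR : IsMoorePenrose R Rp)
    (h₁ : Cp * C * (R * Rᵀ * Cᵀ) = R * Rᵀ * Cᵀ) (h₂ : R * Rp * (Cᵀ * C * R) = Cᵀ * C * R) :
    IsMoorePenrose (C * R) (Rp * Cp) := by
  have hPS := commute_of_greville_left hC h₁
  have hQS := commute_of_greville_left (R := Cᵀ) hR.transpose
    (by rwa [transpose_transpose, transpose_transpose, hR.pinv_transpose_mul_transpose])
  have h₃ := transpose_pinv_mul_self_of_commute hR.transpose hC.transpose hQS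
  simp only [← transpose_mul, transpose_transpose] at h₃
  exact ⟨mul_pinv_mul_self_of_commute hC hR hPS, pinv_mul_self_mul_pinv_of_commute hC hR hPS,
    h₃.symm, transpose_pinv_mul_self_of_commute hC hR hPS⟩

end Greville

/-- Greville's conditions: the reverse order law `(C * R)⁺ = R⁺ * C⁺` holds if and only if
the column space of `R * Rᵀ * Cᵀ` is contained in the column space of `Cᵀ` and the column
space of `Cᵀ * C * R` is contained in the column space of `R`. -/
theorem greville_conditions (m r n : ℕ)
    (C : Matrix (Fin m) (Fin r) ℝ) (R : Matrix (Fin r) (Fin n) ℝ)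
    (Ap : Matrix (Fin n) (Fin m) ℝ)
    (Cp : Matrix (Fin r) (Fin m) ℝ) (Rp : Matrix (Fin n) (Fin r) ℝ)
    (hAp : IsMoorePenrose (C * R) Ap)
    (hCp : IsMoorePenrose C Cp) (hRp : IsMoorePenrose R Rp) :
    Ap = Rp * Cp ↔
      (LinearMap.range (R * Rᵀ * Cᵀ).mulVecLin ≤ LinearMap.range Cᵀ.mulVecLin ∧
       LinearMap.range (Cᵀ * C * R).mulVecLin ≤ LinearMap.range R.mulVecLin) := by
  rw [range_mulVecLin_le_iff hCp.transpose.1, range_mulVecLin_le_iff hRp.1,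
    hCp.transpose_mul_pinv_transpose]
  constructor
  · rintro rfl
    exact ⟨greville_left_of_isMoorePenrose_mul hCp hRp hAp,
      greville_right_of_isMoorePenrose_mul hCp hRp hAp⟩
  · rintro ⟨h₁, h₂⟩
    exact hAp.unique (isMoorePenrose_mul_of_greville hCp hRp h₁ h₂)
end

section
/- (Penrose.) Let A be a real m×n matrix, C̄ a real m×p matrix, and R̄ a real q×n matrix. Let G be any {1}-inverse of C̄ (i.e. C̄GC̄ = C̄) and H any {1}-inverse of R̄ (i.e. R̄HR̄ = R̄). Then the matrix equation C̄XR̄ = A has a solution X (a p×q matrix) if and only if (C̄G)A(HR̄) = A, and in that case the solutions are exactly the matrices X = GAH + Z − (GC̄)Z(R̄H), where Z ranges over all p×q matrices. -/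
/-! Since `C̄ G C̄ = C̄` and `R̄ H R̄ = R̄`, the map `X ↦ G C̄ X R̄ H` does not change `C̄ X R̄`.
Applied to a solution `X` this gives consistency `C̄ G A H R̄ = A`, exhibits `G A H` as a solution,
and writes `X = G A H + X - G C̄ X R̄ H`; applied to an arbitrary `Z` it shows that
`Z - G C̄ Z R̄ H` solves the homogeneous equation. -/

namespace Matrix

variable {α : Type*} {m n p q : Type*} [Fintype m] [Fintype n] [Fintype p] [Fintype q]
  {Cb : Matrix m p α} {Rb : Matrix q n α} {G : Matrix p m α} {H : Matrix n q α}

section Semiring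

variable [Semiring α]

theorem mul_mul_mul_eq_of_inner_inverse (hG : Cb * G * Cb = Cb) (hH : Rb * H * Rb = Rb)
    (X : Matrix p q α) : Cb * (G * Cb * X * (Rb * H)) * Rb = Cb * X * Rb := by
  calc Cb * (G * Cb * X * (Rb * H)) * Rb = (Cb * G * Cb) * X * (Rb * H * Rb) := by
        simp only [Matrix.mul_assoc]
    _ = Cb * X * Rb := by rw [hG, hH]

theorem exists_mul_mul_eq_iff_of_inner_inverse (hG : Cb * G * Cb = Cb) (hH : Rb * H * Rb = Rb)
    (A : Matrix m n α) : (∃ X : Matrix p q α, Cb * X * Rb = A) ↔ Cb * G * A * (H * Rb) = A := by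
  constructor
  · rintro ⟨X, rfl⟩
    simpa only [Matrix.mul_assoc] using mul_mul_mul_eq_of_inner_inverse hG hH X
  · intro hA
    exact ⟨G * A * H, (by simp only [Matrix.mul_assoc] : _ = Cb * G * A * (H * Rb)).trans hA⟩

end Semiring

theorem mul_mul_eq_iff_exists_of_inner_inverse [Ring α] (hG : Cb * G * Cb = Cb)
    (hH : Rb * H * Rb = Rb) {A : Matrix m n α} (hA : Cb * G * A * (H * Rb) = A)
    (X : Matrix p q α) :
    Cb * X * Rb = A ↔ ∃ Z : Matrix p q α, X = G * A * H + Z - G * Cb * Z * (Rb * H) := by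
  constructor
  · rintro rfl
    refine ⟨X, ?_⟩
    have hX : G * Cb * X * (Rb * H) = G * (Cb * X * Rb) * H := by simp only [Matrix.mul_assoc]
    rw [← hX, add_sub_cancel_left]
  · rintro ⟨Z, rfl⟩
    have hGAH : Cb * (G * A * H) * Rb = A :=
      (by simp only [Matrix.mul_assoc] : _ = Cb * G * A * (H * Rb)).trans hA
    rw [Matrix.mul_sub, Matrix.mul_add, Matrix.sub_mul, Matrix.add_mul, hGAH,
      mul_mul_mul_eq_of_inner_inverse hG hH, add_sub_cancel_right]

end Matrix

/-- Penrose: given `{1}`-inverses `G` of `C̄` and `H` of `R̄`, the matrix equation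
`C̄ * X * R̄ = A` has a solution iff `(C̄ * G) * A * (H * R̄) = A`, in which case the
solutions are exactly the matrices `X = G * A * H + Z - (G * C̄) * Z * (R̄ * H)`. -/
theorem penrose_linear_matrix_equation (m n p q : ℕ)
    (A : Matrix (Fin m) (Fin n) ℝ)
    (Cb : Matrix (Fin m) (Fin p) ℝ) (Rb : Matrix (Fin q) (Fin n) ℝ)
    (G : Matrix (Fin p) (Fin m) ℝ) (H : Matrix (Fin n) (Fin q) ℝ)
    (hG : Cb * G * Cb = Cb) (hH : Rb * H * Rb = Rb) :
    ((∃ X : Matrix (Fin p) (Fin q) ℝ, Cb * X * Rb = A) ↔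
        (Cb * G) * A * (H * Rb) = A) ∧
      ((Cb * G) * A * (H * Rb) = A →
        ∀ X : Matrix (Fin p) (Fin q) ℝ,
          Cb * X * Rb = A ↔
            ∃ Z : Matrix (Fin p) (Fin q) ℝ,
              X = G * A * H + Z - (G * Cb) * Z * (Rb * H)) :=
  ⟨Matrix.exists_mul_mul_eq_iff_of_inner_inverse hG hH A,
    fun hA => Matrix.mul_mul_eq_iff_exists_of_inner_inverse hG hH hA⟩
end

section
/- Let M and N be real symmetric positive semidefinite n×n matrices with M ⪯ N in the Löwner order (i.e. N − M is positive semidefinite), and let d be a vector in the column space of M. Then dᵀ N⁺ d ≤ dᵀ M⁺ d, where M⁺ and N⁺ denote Moore–Penrose pseudoinverses. -/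
open Matrix

/-!
Write `y = N⁺ d` and `z = M⁺ d`. Since `M ⪯ N`, `ker N ⊆ ker M`, hence `range M ⊆ range N`,
so `N y = d` and `M z = d`. Then `dᵀ N⁺ d = 2 yᵀd - yᵀN y ≤ 2 yᵀd - yᵀM y`, and the last
expression is at most `zᵀd = dᵀ M⁺ d` because `(y - z)ᵀ M (y - z) ≥ 0`.
-/

namespace Matrix

section Ring

variable {n R : Type*} [Fintype n]

lemma mulVec_mulVec_eq_self_of_mem_range {m : Type*} [Fintype m] [CommSemiring R]
    {A : Matrix m n R} {G : Matrix n m R} (hAGA : A * G * A = A) {d : m → R}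
    (hd : d ∈ LinearMap.range A.mulVecLin) : A *ᵥ (G *ᵥ d) = d := by
  obtain ⟨x, rfl⟩ := hd
  rw [mulVecLin_apply, mulVec_mulVec, mulVec_mulVec, hAGA]

/-- `N G` is the orthogonal projection onto `range N`, so `M (v - N G v) = 0` because
`N (v - N G v) = 0`. -/
lemma mul_mul_eq_self_of_ker_le [CommRing R] {M N G : Matrix n n R} (hM : Mᵀ = M)
    (hN : Nᵀ = N) (hNGN : N * G * N = N) (hNG : (N * G)ᵀ = N * G)
    (hker : ∀ v, N *ᵥ v = 0 → M *ᵥ v = 0) : N * G * M = M := by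
  have hNNG : N * (N * G) = N := by
    simpa only [transpose_mul, hN, hNG] using congrArg transpose hNGN
  have hMNG : M * (N * G) = M := ext_iff_mulVec.2 fun v => by
    have h := hker (v - (N * G) *ᵥ v) (by rw [mulVec_sub, mulVec_mulVec, hNNG, sub_self])
    rwa [mulVec_sub, sub_eq_zero, mulVec_mulVec, eq_comm] at h
  rw [← hM, ← hNG, ← transpose_mul, hMNG]

end Ring

variable {n : Type*} {A M N : Matrix n n ℝ}

lemma PosSemidef.transpose_eq_self (hA : A.PosSemidef) : Aᵀ = A := by
  simpa using hA.isHermitian.eq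

variable [Fintype n]

lemma PosSemidef.dotProduct_mulVec_le_of_sub (hMN : (N - M).PosSemidef) (v : n → ℝ) :
    v ⬝ᵥ M *ᵥ v ≤ v ⬝ᵥ N *ᵥ v := by
  have h := hMN.dotProduct_mulVec_nonneg v
  rw [star_trivial, sub_mulVec, dotProduct_sub] at h
  linarith

lemma PosSemidef.mulVec_eq_zero_of_sub (hM : M.PosSemidef) (hMN : (N - M).PosSemidef)
    {v : n → ℝ} (hv : N *ᵥ v = 0) : M *ᵥ v = 0 := by
  refine (hM.dotProduct_mulVec_zero_iff v).1 (le_antisymm ?_ (hM.dotProduct_mulVec_nonneg v))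
  simpa [hv] using hMN.dotProduct_mulVec_le_of_sub v

lemma PosSemidef.two_mul_dotProduct_sub_le (hA : A.PosSemidef) {z d : n → ℝ}
    (hz : A *ᵥ z = d) (y : n → ℝ) : 2 * (y ⬝ᵥ d) - y ⬝ᵥ A *ᵥ y ≤ z ⬝ᵥ d := by
  have h := hA.dotProduct_mulVec_nonneg (y - z)
  have hzy : z ⬝ᵥ A *ᵥ y = y ⬝ᵥ d := by
    rw [dotProduct_mulVec, ← mulVec_transpose, hA.transpose_eq_self, hz, dotProduct_comm]
  rw [star_trivial, mulVec_sub, dotProduct_sub, sub_dotProduct, sub_dotProduct, hzy, hz] at h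
  linarith

end Matrix

/-- If `M ⪯ N` in the Löwner order (both symmetric positive semidefinite) and `d` lies in
the column space of `M`, then `dᵀ N⁺ d ≤ dᵀ M⁺ d`. -/
theorem pinv_quadratic_form_antitone (n : ℕ)
    (M N : Matrix (Fin n) (Fin n) ℝ)
    (hM : M.PosSemidef) (hN : N.PosSemidef) (hMN : (N - M).PosSemidef)
    (Mp Np : Matrix (Fin n) (Fin n) ℝ)
    (hMp : IsMoorePenrose M Mp) (hNp : IsMoorePenrose N Np)
    (d : Fin n → ℝ) (hd : d ∈ LinearMap.range M.mulVecLin) :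
    d ⬝ᵥ Np.mulVec d ≤ d ⬝ᵥ Mp.mulVec d := by
  have hMz : M *ᵥ (Mp *ᵥ d) = d := mulVec_mulVec_eq_self_of_mem_range hMp.1 hd
  have hNNpM : N * Np * M = M :=
    mul_mul_eq_self_of_ker_le hM.transpose_eq_self hN.transpose_eq_self hNp.1 hNp.2.2.1
      fun _ => hM.mulVec_eq_zero_of_sub hMN
  have hNy : N *ᵥ (Np *ᵥ d) = d := by
    obtain ⟨x, rfl⟩ := hd
    rw [mulVecLin_apply, mulVec_mulVec, mulVec_mulVec, hNNpM]
  set y := Np *ᵥ d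
  calc d ⬝ᵥ Np *ᵥ d = 2 * (y ⬝ᵥ d) - y ⬝ᵥ N *ᵥ y := by rw [hNy, dotProduct_comm]; ring
    _ ≤ 2 * (y ⬝ᵥ d) - y ⬝ᵥ M *ᵥ y := by linarith [hMN.dotProduct_mulVec_le_of_sub y]
    _ ≤ (Mp *ᵥ d) ⬝ᵥ d := hM.two_mul_dotProduct_sub_le hMz y
    _ = d ⬝ᵥ Mp *ᵥ d := dotProduct_comm _ _
end

section
/- Let A be a real m×n matrix and P a real m×p matrix with rank(PᵀA) = rank(A). Then the orthogonal projectors onto the row space of A and of PᵀA coincide: (PᵀA)⁺(PᵀA) = A⁺A, where ⁺ denotes the Moore–Penrose pseudoinverse. -/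
open Matrix

/-!
`A⁺A` is the orthogonal projector with kernel `ker A`, so it depends on `A` only through
`ker A`: if `ker A = ker B` then `A (B⁺B) = A` and `B (A⁺A) = B`, and two symmetric matrices
`E, F` with `EF = E`, `FE = F` are equal. Since `ker A ≤ ker (PᵀA)`, the rank hypothesis
forces `ker (PᵀA) = ker A` by rank–nullity.
-/

namespace Matrix

variable {k m n o R : Type*} [Fintype n]

theorem ker_mulVecLin_mul_eq_of_rank_eq [Fintype m] [Field R] (M : Matrix k m R)
    (A : Matrix m n R) (h : (M * A).rank = A.rank) :
    LinearMap.ker (M * A).mulVecLin = LinearMap.ker A.mulVecLin := by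
  refine (Submodule.eq_of_le_of_finrank_eq ?_ ?_).symm
  · rw [mulVecLin_mul]
    exact LinearMap.ker_le_ker_comp _ _
  · have hA := LinearMap.finrank_range_add_finrank_ker A.mulVecLin
    have hMA := LinearMap.finrank_range_add_finrank_ker (M * A).mulVecLin
    rw [rank, rank] at h
    omega

theorem mul_eq_zero_of_ker_mulVecLin_le [Fintype o] [CommRing R] {A : Matrix k n R}
    {B : Matrix m n R} (hker : LinearMap.ker B.mulVecLin ≤ LinearMap.ker A.mulVecLin)
    {X : Matrix n o R} (hBX : B * X = 0) : A * X = 0 := by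
  have hX : LinearMap.range X.mulVecLin ≤ LinearMap.ker B.mulVecLin :=
    LinearMap.range_le_ker_iff.2 (by rw [← mulVecLin_mul, hBX, mulVecLin_zero])
  classical
  apply toLin'.injective
  rw [map_zero, toLin'_apply', mulVecLin_mul]
  exact LinearMap.range_le_ker_iff.1 (hX.trans hker)

theorem eq_of_mul_eq_of_transpose_eq [CommSemiring R] {E F : Matrix n n R}
    (hE : Eᵀ = E) (hF : Fᵀ = F) (hEF : E * F = E) (hFE : F * E = F) : E = F :=
  calc E = (E * F)ᵀ := by rw [hEF, hE]
    _ = F * E := by rw [transpose_mul, hE, hF]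
    _ = F := hFE

end Matrix

namespace IsMoorePenrose

variable {k m n : ℕ} {B : Matrix (Fin m) (Fin n) ℝ} {G : Matrix (Fin n) (Fin m) ℝ}

theorem mul_mul_self_of_ker_le (hG : IsMoorePenrose B G) {A : Matrix (Fin k) (Fin n) ℝ}
    (hker : LinearMap.ker B.mulVecLin ≤ LinearMap.ker A.mulVecLin) : A * (G * B) = A := by
  have hB : B * (1 - G * B) = 0 := by
    rw [Matrix.mul_sub, Matrix.mul_one, ← Matrix.mul_assoc, hG.1, sub_self]
  simpa only [Matrix.mul_sub, Matrix.mul_one, sub_eq_zero, eq_comm] using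
    mul_eq_zero_of_ker_mulVecLin_le hker hB

theorem mul_self_eq_of_ker_eq (hG : IsMoorePenrose B G) {A : Matrix (Fin k) (Fin n) ℝ}
    {Ap : Matrix (Fin n) (Fin k) ℝ} (hAp : IsMoorePenrose A Ap)
    (hker : LinearMap.ker B.mulVecLin = LinearMap.ker A.mulVecLin) : G * B = Ap * A :=
  eq_of_mul_eq_of_transpose_eq hG.2.2.2 hAp.2.2.2
    (by rw [Matrix.mul_assoc, hAp.mul_mul_self_of_ker_le hker.ge])
    (by rw [Matrix.mul_assoc, hG.mul_mul_self_of_ker_le hker.le])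

end IsMoorePenrose

/-- If `rank (Pᵀ A) = rank A`, then the orthogonal projectors onto the row spaces of
`A` and of `Pᵀ A` coincide: `(Pᵀ A)⁺ (Pᵀ A) = A⁺ A`. -/
theorem row_space_projector_eq (m n p : ℕ)
    (A : Matrix (Fin m) (Fin n) ℝ) (P : Matrix (Fin m) (Fin p) ℝ)
    (Ap : Matrix (Fin n) (Fin m) ℝ) (G : Matrix (Fin n) (Fin p) ℝ)
    (hAp : IsMoorePenrose A Ap) (hG : IsMoorePenrose (Pᵀ * A) G)
    (hrank : (Pᵀ * A).rank = A.rank) :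
    G * (Pᵀ * A) = Ap * A :=
  hG.mul_self_eq_of_ker_eq hAp (ker_mulVecLin_mul_eq_of_rank_eq Pᵀ A hrank)
end

section
/- Let A be a real m×n matrix, P a real m×p matrix, and Q a real n×q matrix satisfying rank(PᵀA) = rank(AQ) = rank(A). Let G be any {1}-inverse of PᵀA (i.e. (PᵀA)G(PᵀA) = PᵀA) and H any {1}-inverse of AQ (i.e. (AQ)H(AQ) = AQ). Then A^g = G Pᵀ A Q H is a {1,2}-inverse of A; that is, A A^g A = A and A^g A A^g = A^g. -/
/-!
Equal ranks force equal kernels: `ker A ≤ ker (Pᵀ A)` and rank–nullity give `ker (Pᵀ A) = ker A`.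
Since `(G Pᵀ A - 1) x ∈ ker (Pᵀ A)` for every `x`, this yields `A G Pᵀ A = A`, and dually (by
transposition) `A Q H A = A`. Both Penrose equations for `G Pᵀ A Q H` then follow by reassociating.
-/

open Matrix

theorem LinearMap.ker_comp_eq_of_finrank_range_eq {K V W U : Type*} [Field K]
    [AddCommGroup V] [Module K V] [FiniteDimensional K V] [AddCommGroup W] [Module K W]
    [AddCommGroup U] [Module K U] (f : V →ₗ[K] W) (g : W →ₗ[K] U)
    (h : Module.finrank K (range (g ∘ₗ f)) = Module.finrank K (range f)) :
    ker (g ∘ₗ f) = ker f := by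
  refine (Submodule.eq_of_le_of_finrank_eq (ker_le_ker_comp f g) ?_).symm
  have hf := f.finrank_range_add_finrank_ker
  have hgf := (g ∘ₗ f).finrank_range_add_finrank_ker
  omega

namespace Matrix

variable {K l m n : Type*} [Field K] [Fintype m] [Fintype n]

theorem ker_mulVecLin_mul_eq_of_rank_mul_eq (C : Matrix l m K) (A : Matrix m n K)
    (h : (C * A).rank = A.rank) :
    LinearMap.ker (C * A).mulVecLin = LinearMap.ker A.mulVecLin := by
  rw [rank, rank, mulVecLin_mul] at h
  rw [mulVecLin_mul]
  exact LinearMap.ker_comp_eq_of_finrank_range_eq _ _ h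

theorem mul_mul_mul_eq_self_of_rank_mul_eq_left [Fintype l] {C : Matrix l m K}
    {A : Matrix m n K} {G : Matrix n l K} (h : (C * A).rank = A.rank)
    (hG : C * A * G * (C * A) = C * A) :
    A * G * (C * A) = A := by
  refine ext_iff_mulVec.2 fun x => ?_
  have hx : (G * (C * A)) *ᵥ x - x ∈ LinearMap.ker (C * A).mulVecLin := by
    rw [LinearMap.mem_ker, mulVecLin_apply, mulVec_sub, mulVec_mulVec, ← Matrix.mul_assoc, hG,
      sub_self]
  rw [ker_mulVecLin_mul_eq_of_rank_mul_eq C A h, LinearMap.mem_ker, mulVecLin_apply, mulVec_sub,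
    sub_eq_zero, mulVec_mulVec] at hx
  rwa [Matrix.mul_assoc]

theorem mul_mul_mul_eq_self_of_rank_mul_eq_right [Fintype l] {A : Matrix m n K}
    {Q : Matrix n l K} {H : Matrix l m K} (h : (A * Q).rank = A.rank)
    (hH : A * Q * H * (A * Q) = A * Q) :
    A * Q * H * A = A := by
  have hrank : (Qᵀ * Aᵀ).rank = Aᵀ.rank := by
    rw [← transpose_mul, rank_transpose, rank_transpose, h]
  have hHt : Qᵀ * Aᵀ * Hᵀ * (Qᵀ * Aᵀ) = Qᵀ * Aᵀ := by
    simpa only [transpose_mul, Matrix.mul_assoc] using congrArg transpose hH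
  simpa only [transpose_mul, transpose_transpose, Matrix.mul_assoc] using
    congrArg transpose (mul_mul_mul_eq_self_of_rank_mul_eq_left hrank hHt)

end Matrix

/-- If `rank (Pᵀ A) = rank (A Q) = rank A`, `G` is a `{1}`-inverse of `Pᵀ A` and `H` is a
`{1}`-inverse of `A Q`, then `A^g = G Pᵀ A Q H` is a `{1,2}`-inverse of `A`. -/
theorem randomized_one_two_inverse (m n p q : ℕ)
    (A : Matrix (Fin m) (Fin n) ℝ)
    (P : Matrix (Fin m) (Fin p) ℝ) (Q : Matrix (Fin n) (Fin q) ℝ)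
    (G : Matrix (Fin n) (Fin p) ℝ) (H : Matrix (Fin q) (Fin m) ℝ)
    (hrP : (Pᵀ * A).rank = A.rank) (hrQ : (A * Q).rank = A.rank)
    (hG : (Pᵀ * A) * G * (Pᵀ * A) = Pᵀ * A)
    (hH : (A * Q) * H * (A * Q) = A * Q) :
    A * (G * Pᵀ * A * Q * H) * A = A ∧
      (G * Pᵀ * A * Q * H) * A * (G * Pᵀ * A * Q * H) = G * Pᵀ * A * Q * H := by
  have hAG : A * G * (Pᵀ * A) = A := mul_mul_mul_eq_self_of_rank_mul_eq_left hrP hG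
  have hAH : A * Q * H * A = A := mul_mul_mul_eq_self_of_rank_mul_eq_right hrQ hH
  constructor
  · calc A * (G * Pᵀ * A * Q * H) * A = A * G * (Pᵀ * A) * Q * H * A := by
          simp only [Matrix.mul_assoc]
      _ = A := by rw [hAG, hAH]
  · calc (G * Pᵀ * A * Q * H) * A * (G * Pᵀ * A * Q * H)
        = G * (Pᵀ * (A * Q * H * A) * G * (Pᵀ * A)) * Q * H := by
          simp only [Matrix.mul_assoc]
      _ = G * Pᵀ * A * Q * H := by rw [hAH, hG]; simp only [Matrix.mul_assoc]
end

section
/- Let A be a real m×n matrix of rank r, P a real m×p matrix, and Q a real n×q matrix satisfying rank(PᵀA) = rank(AQ) = rank(A) = r. Let PᵀAQ = CR be a full rank factorization of the sketched matrix, where C is p×r with full column rank r and R is r×q with full row rank r. Then A^g = Q (CR)⁺ Pᵀ is a {1,2}-inverse of A; that is, A A^g A = A and A^g A A^g = A^g, where (CR)⁺ denotes the Moore–Penrose pseudoinverse of CR. -/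
/-!
The rank conditions say that `A Q` has the column space of `A` and `Pᵀ A` the row space of `A`,
so `A = X (Pᵀ A)` and `A = (A Q) Y` for suitable `X`, `Y`. Hence
`A (Q W Pᵀ) A = X (Pᵀ A Q) W (Pᵀ A Q) Y = X (Pᵀ A Q) Y = A` for any `{1}`-inverse `W` of the
sketch `Pᵀ A Q = C R`, while `W (Pᵀ A Q) W = W` gives the second equation directly.
-/

open Matrix

namespace Matrix

section Field

variable {K : Type*} [Field K] {l m n k : Type*} [Fintype n] [Fintype k]

theorem exists_mul_eq_of_range_mulVecLin_le {A : Matrix l n K} {B : Matrix l k K}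
    (h : LinearMap.range A.mulVecLin ≤ LinearMap.range B.mulVecLin) :
    ∃ Y : Matrix k n K, B * Y = A := by
  have hcol (j : n) : A.col j ∈ LinearMap.range B.mulVecLin :=
    h (A.range_mulVecLin ▸ Submodule.subset_span ⟨j, rfl⟩)
  choose v hv using hcol
  refine ⟨(of v)ᵀ, ext fun i j => ?_⟩
  simpa [mul_apply, mulVec, dotProduct] using congrFun (hv j) i

theorem range_mulVecLin_mul_eq_of_rank_mul_eq [Finite l] {A : Matrix l n K} {Q : Matrix n k K}
    (h : (A * Q).rank = A.rank) :
    LinearMap.range (A * Q).mulVecLin = LinearMap.range A.mulVecLin := by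
  refine Submodule.eq_of_le_of_finrank_le ?_ h.ge
  rw [mulVecLin_mul]
  exact LinearMap.range_comp_le_range _ _

theorem exists_mul_mul_eq_self_of_rank_mul_eq_right [Finite l] {A : Matrix l n K}
    {Q : Matrix n k K} (h : (A * Q).rank = A.rank) :
    ∃ Y : Matrix k n K, A * Q * Y = A :=
  exists_mul_eq_of_range_mulVecLin_le (range_mulVecLin_mul_eq_of_rank_mul_eq h).ge

theorem exists_mul_mul_eq_self_of_rank_mul_eq_left [Fintype m] {A : Matrix m n K}
    {P : Matrix k m K} (h : (P * A).rank = A.rank) :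
    ∃ X : Matrix m k K, X * (P * A) = A := by
  have hT : (Aᵀ * Pᵀ).rank = Aᵀ.rank := by
    rw [← transpose_mul, rank_transpose, rank_transpose, h]
  obtain ⟨Y, hY⟩ := exists_mul_mul_eq_self_of_rank_mul_eq_right hT
  exact ⟨Yᵀ, by simpa [transpose_mul, Matrix.mul_assoc] using congrArg transpose hY⟩

end Field

variable {α : Type*} [Semiring α] {m n k o : Type*} [Fintype m] [Fintype n] [Fintype k]
  [Fintype o]

theorem mul_mul_mul_eq_self_of_sketch {A : Matrix m n α} {P : Matrix k m α} {Q : Matrix n o α}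
    {W : Matrix o k α} {X : Matrix m k α} {Y : Matrix o n α}
    (hX : X * (P * A) = A) (hY : A * Q * Y = A) (hW : P * A * Q * W * (P * A * Q) = P * A * Q) :
    A * (Q * W * P) * A = A :=
  have hXS : X * (P * A * Q) = A * Q := by rw [← Matrix.mul_assoc, hX]
  have hSY : P * A * Q * Y = P * A := by rw [Matrix.mul_assoc P A Q, Matrix.mul_assoc, hY]
  calc A * (Q * W * P) * A = A * Q * W * (P * A) := by simp only [Matrix.mul_assoc]
    _ = X * (P * A * Q) * W * (P * A * Q * Y) := by rw [hXS, hSY]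
    _ = X * (P * A * Q * W * (P * A * Q)) * Y := by simp only [Matrix.mul_assoc]
    _ = A := by rw [hW, hXS, hY]

theorem mul_mul_mul_eq_self_of_sketch_right {A : Matrix m n α} {P : Matrix k m α}
    {Q : Matrix n o α} {W : Matrix o k α} (hW : W * (P * A * Q) * W = W) :
    Q * W * P * A * (Q * W * P) = Q * W * P := by
  simpa only [Matrix.mul_assoc] using congrArg (fun M => Q * M * P) hW

end Matrix

theorem sketched_full_rank_one_two_inverse_general (m n p q r : ℕ)
    (A : Matrix (Fin m) (Fin n) ℝ)
    (P : Matrix (Fin m) (Fin p) ℝ) (Q : Matrix (Fin n) (Fin q) ℝ)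
    (C : Matrix (Fin p) (Fin r) ℝ) (R : Matrix (Fin r) (Fin q) ℝ)
    (W : Matrix (Fin q) (Fin p) ℝ)
    (hrP : (Pᵀ * A).rank = A.rank) (hrQ : (A * Q).rank = A.rank)
    (hfact : Pᵀ * A * Q = C * R)
    (hW : IsMoorePenrose (C * R) W) :
    A * (Q * W * Pᵀ) * A = A ∧
      (Q * W * Pᵀ) * A * (Q * W * Pᵀ) = Q * W * Pᵀ := by
  obtain ⟨X, hX⟩ := exists_mul_mul_eq_self_of_rank_mul_eq_left hrP
  obtain ⟨Y, hY⟩ := exists_mul_mul_eq_self_of_rank_mul_eq_right hrQ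
  obtain ⟨hW₁, hW₂, -⟩ := hfact ▸ hW
  exact ⟨mul_mul_mul_eq_self_of_sketch hX hY hW₁, mul_mul_mul_eq_self_of_sketch_right hW₂⟩

/-- If `rank (Pᵀ A) = rank (A Q) = rank A = r` and `Pᵀ A Q = C * R` is a full-rank
factorization of the sketched matrix, then `A^g = Q (C R)⁺ Pᵀ` is a `{1,2}`-inverse
of `A`. -/
theorem sketched_full_rank_one_two_inverse (m n p q r : ℕ)
    (A : Matrix (Fin m) (Fin n) ℝ)
    (P : Matrix (Fin m) (Fin p) ℝ) (Q : Matrix (Fin n) (Fin q) ℝ)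
    (C : Matrix (Fin p) (Fin r) ℝ) (R : Matrix (Fin r) (Fin q) ℝ)
    (W : Matrix (Fin q) (Fin p) ℝ)
    (hr : A.rank = r) (hrP : (Pᵀ * A).rank = A.rank) (hrQ : (A * Q).rank = A.rank)
    (hfact : Pᵀ * A * Q = C * R)
    (hC : LinearIndependent ℝ (fun j : Fin r => fun i : Fin p => C i j))
    (hR : LinearIndependent ℝ (fun i : Fin r => R i))
    (hW : IsMoorePenrose (C * R) W) :
    A * (Q * W * Pᵀ) * A = A ∧
      (Q * W * Pᵀ) * A * (Q * W * Pᵀ) = Q * W * Pᵀ :=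
  sketched_full_rank_one_two_inverse_general m n p q r A P Q C R W hrP hrQ hfact hW
end
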